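/- For p with Re(p²) > 0, a, b > 0, and Re ν > -1, ∫₀^∞ e^{-p x²} x^{ν+2r+1} J_{ν+2r}(x√(a²+b²)) dx = (a²+b²)^{ν/2+r}/(2p)^{ν+2r+1} · exp(-(a²+b²)/(4p)), for every nonnegative integer r. -/

import Mathlib

/-!
With `c = √(a² + b²)` and `μ = ν + 2r`, expand `J_μ(cx)` in its power series and integrate term by
term. Each term is a Gaussian moment `∫₀^∞ e^{-px²} x^{2s-1} dx = Γ(s) / (2 p^s)`; the substitution
`t = x²` turns it into the Laplace transform of `t^{s-1}`, which is `Γ(s) / p^s` for real `p > 0`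
and hence, both sides being holomorphic in `p`, on the whole half-plane `Re p > 0`. The integrals
of the absolute values of the terms are summable because `Γ(m + Re μ + 1) / |Γ(m + μ + 1)|` is
nonincreasing in `m`, and the series of the integrals is the exponential series of `-c² / (4p)`.
-/

open Real Complex MeasureTheory

/-- Bessel function of the first kind, `J_μ(x) = Σ (-1)^m/(m! Γ(m+μ+1)) (x/2)^{2m+μ}`. -/
noncomputable def besselJ (μ : ℂ) (x : ℂ) : ℂ :=
  ∑' m : ℕ, ((-1)^m / ((m.factorial : ℂ) * Complex.Gamma ((m : ℂ) + μ + 1))) *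
    (x/2) ^ (2*(m:ℂ) + μ)

open Set Filter Topology

theorem Complex.ofReal_mul_cpow {r : ℝ} (hr : 0 ≤ r) (z s : ℂ) :
    ((r : ℂ) * z) ^ s = (r : ℂ) ^ s * z ^ s := by
  rcases eq_or_ne s 0 with rfl | hs
  · simp
  rcases hr.eq_or_lt with rfl | hr
  · simp [zero_cpow hs]
  rcases eq_or_ne z 0 with rfl | hz
  · simp [zero_cpow hs]
  have hr' : (r : ℂ) ≠ 0 := ofReal_ne_zero.2 hr.ne'
  rw [cpow_def_of_ne_zero (mul_ne_zero hr' hz), log_ofReal_mul hr hz, ofReal_log hr.le,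
    add_mul, Complex.exp_add, ← cpow_def_of_ne_zero hr', ← cpow_def_of_ne_zero hz]

section GammaIntegral

variable {a p : ℂ}

lemma norm_cpow_mul_cexp_neg_mul {t : ℝ} (ht : 0 < t) :
    ‖(t : ℂ) ^ (a - 1) * cexp (-(p * t))‖ = t ^ (a.re - 1) * Real.exp (-p.re * t) := by
  simp [norm_cpow_eq_rpow_re_of_pos ht, Complex.norm_exp]

lemma integrableOn_cpow_mul_cexp_neg_mul (ha : 0 < a.re) (hp : 0 < p.re) :
    IntegrableOn (fun t : ℝ => (t : ℂ) ^ (a - 1) * cexp (-(p * t))) (Ioi 0) := by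
  refine Integrable.mono' (g := fun t => t ^ (a.re - 1) * Real.exp (-p.re * t)) ?_
    (by fun_prop : Measurable _).aestronglyMeasurable ?_
  · simpa [IntegrableOn] using
      integrableOn_rpow_mul_exp_neg_mul_rpow (p := 1) (by linarith) one_pos hp
  · filter_upwards [ae_restrict_mem measurableSet_Ioi] with t ht
    exact (norm_cpow_mul_cexp_neg_mul ht).le

lemma differentiableAt_integral_cpow_mul_cexp_neg_mul (ha : 0 < a.re) (hp : 0 < p.re) :
    DifferentiableAt ℂ
      (fun q : ℂ => ∫ t in Ioi (0 : ℝ), (t : ℂ) ^ (a - 1) * cexp (-(q * t))) p := by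
  set ε := p.re / 2 with hε_def
  have hε : 0 < ε := half_pos hp
  have re_gt : ∀ q ∈ Metric.ball p ε, ε < q.re := fun q hq => by
    have := (abs_re_le_norm (q - p)).trans_lt (mem_ball_iff_norm.1 hq)
    rw [sub_re, abs_lt] at this
    linarith [this.1]
  refine (hasDerivAt_integral_of_dominated_loc_of_deriv_le (μ := volume.restrict (Ioi 0))
    (Metric.ball_mem_nhds p hε)
    (F := fun q (t : ℝ) => (t : ℂ) ^ (a - 1) * cexp (-(q * t)))
    (F' := fun q (t : ℝ) => (t : ℂ) ^ (a - 1) * (cexp (-(q * t)) * -t))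
    (bound := fun t => t ^ a.re * Real.exp (-ε * t)) ?_ (integrableOn_cpow_mul_cexp_neg_mul ha hp)
    (by fun_prop : Measurable _).aestronglyMeasurable ?_ ?_ ?_).2.differentiableAt
  · filter_upwards [Metric.ball_mem_nhds p hε] with q hq
    exact (integrableOn_cpow_mul_cexp_neg_mul ha (hε.trans (re_gt q hq))).aestronglyMeasurable
  · filter_upwards [ae_restrict_mem measurableSet_Ioi] with t (ht : 0 < t) q hq
    rw [← mul_assoc, norm_mul, norm_cpow_mul_cexp_neg_mul ht, norm_neg, norm_real,
      Real.norm_of_nonneg ht.le, mul_right_comm, ← Real.rpow_add_one ht.ne', sub_add_cancel]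
    gcongr
    exact (re_gt q hq).le
  · simpa [IntegrableOn] using
      integrableOn_rpow_mul_exp_neg_mul_rpow (p := 1) (by linarith) one_pos hε
  · exact ae_of_all _ fun t q _ => ((hasDerivAt_mul_const (t : ℂ)).neg.cexp).const_mul _

theorem integral_cpow_mul_cexp_neg_mul_Ioi (ha : 0 < a.re) (hp : 0 < p.re) :
    ∫ t in Ioi (0 : ℝ), (t : ℂ) ^ (a - 1) * cexp (-(p * t)) = Complex.Gamma a / p ^ a := by
  set U : Set ℂ := {q | 0 < q.re}
  have hU : IsOpen U := isOpen_lt continuous_const continuous_re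
  have integral_analytic : AnalyticOnNhd ℂ
      (fun q : ℂ => ∫ t in Ioi (0 : ℝ), (t : ℂ) ^ (a - 1) * cexp (-(q * t))) U :=
    DifferentiableOn.analyticOnNhd
      (fun q hq => (differentiableAt_integral_cpow_mul_cexp_neg_mul ha hq).differentiableWithinAt)
      hU
  have gamma_analytic : AnalyticOnNhd ℂ (fun q : ℂ => Complex.Gamma a / q ^ a) U := by
    refine DifferentiableOn.analyticOnNhd (fun q (hq : 0 < q.re) => ?_) hU
    have hq0 : q ≠ 0 := fun h => by simp [h] at hq
    exact ((differentiableAt_const _).div (differentiableAt_id.cpow_const (Or.inl hq))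
      (cpow_ne_zero_iff.2 (Or.inl hq0))).differentiableWithinAt
  have eq_on_reals : ∀ r : ℝ, 0 < r →
      ∫ t in Ioi (0 : ℝ), (t : ℂ) ^ (a - 1) * cexp (-(r * t)) =
        Complex.Gamma a / (r : ℂ) ^ a := by
    intro r hr
    rw [Complex.integral_cpow_mul_exp_neg_mul_Ioi ha hr, one_div, inv_cpow_ofReal_nonneg hr.le,
      inv_mul_eq_div]
  have ofReal_tendsto : Tendsto ((↑) : ℝ → ℂ) (𝓝[≠] 1) (𝓝[≠] 1) :=
    tendsto_nhdsWithin_iff.2 ⟨tendsto_nhdsWithin_of_tendsto_nhds continuous_ofReal.continuousAt,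
      eventually_nhdsWithin_of_forall fun _ ht => ofReal_ne_one.2 ht⟩
  exact integral_analytic.eqOn_of_preconnected_of_frequently_eq gamma_analytic
    (convex_halfSpace_re_gt 0).isPreconnected (by simp [U]) (ofReal_tendsto.frequently
      ((eventually_nhdsWithin_of_eventually_nhds (eventually_gt_nhds one_pos)).mono
        eq_on_reals).frequently) hp

end GammaIntegral

section GaussianMoment

variable {p s : ℂ}

lemma norm_cexp_neg_mul_sq_mul_cpow {x : ℝ} (hx : 0 < x) :
    ‖cexp (-p * (x : ℂ) ^ 2) * (x : ℂ) ^ (2 * s - 1)‖ =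
      x ^ (2 * s.re - 1) * Real.exp (-p.re * x ^ 2) := by
  rw [mul_comm, norm_mul, norm_cpow_eq_rpow_re_of_pos hx, Complex.norm_exp, ← ofReal_pow, neg_mul,
    neg_re, re_mul_ofReal, neg_mul]
  simp

lemma integrableOn_cexp_neg_mul_sq_mul_cpow (hs : 0 < s.re) (hp : 0 < p.re) :
    IntegrableOn (fun x : ℝ => cexp (-p * (x : ℂ) ^ 2) * (x : ℂ) ^ (2 * s - 1)) (Ioi 0) := by
  refine Integrable.mono'
    (integrableOn_rpow_mul_exp_neg_mul_sq hp (s := 2 * s.re - 1) (by linarith))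
    (by fun_prop : Measurable _).aestronglyMeasurable ?_
  filter_upwards [ae_restrict_mem measurableSet_Ioi] with x hx
  exact (norm_cexp_neg_mul_sq_mul_cpow hx).le

lemma integral_norm_cexp_neg_mul_sq_mul_cpow (hs : 0 < s.re) (hp : 0 < p.re) :
    ∫ x in Ioi (0 : ℝ), ‖cexp (-p * (x : ℂ) ^ 2) * (x : ℂ) ^ (2 * s - 1)‖ =
      Real.Gamma s.re / (2 * p.re ^ s.re) := by
  rw [setIntegral_congr_fun measurableSet_Ioi fun x hx => norm_cexp_neg_mul_sq_mul_cpow hx]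
  simp_rw [← Real.rpow_two]
  rw [integral_rpow_mul_exp_neg_mul_rpow two_pos (by linarith) hp,
    show (2 * s.re - 1 + 1) / 2 = s.re by ring, show -(2 * s.re - 1 + 1) / 2 = -s.re by ring,
    Real.rpow_neg hp.le]
  field_simp

theorem integral_cexp_neg_mul_sq_mul_cpow (hs : 0 < s.re) (hp : 0 < p.re) :
    ∫ x in Ioi (0 : ℝ), cexp (-p * (x : ℂ) ^ 2) * (x : ℂ) ^ (2 * s - 1) =
      Complex.Gamma s / (2 * p ^ s) := by
  have substitution := integral_comp_rpow_Ioi_of_pos two_pos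
    (g := fun t : ℝ => (t : ℂ) ^ (s - 1) * cexp (-(p * t)))
  have integrand_eq : ∀ x ∈ Ioi (0 : ℝ), ((2 : ℝ) * x ^ ((2 : ℝ) - 1)) •
      (((x ^ (2 : ℝ) : ℝ) : ℂ) ^ (s - 1) * cexp (-(p * (x ^ (2 : ℝ) : ℝ)))) =
      2 * (cexp (-p * (x : ℂ) ^ 2) * (x : ℂ) ^ (2 * s - 1)) := fun x (hx : 0 < x) => by
    have hx0 : (x : ℂ) ≠ 0 := ofReal_ne_zero.2 hx.ne'
    rw [← cpow_mul_ofReal_nonneg hx.le, show 2 * s - 1 = 2 * (s - 1) + 1 by ring,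
      cpow_add _ _ hx0, cpow_one, Real.rpow_two, show (2 : ℝ) - 1 = 1 by norm_num, Real.rpow_one,
      real_smul]
    push_cast
    rw [neg_mul]
    ring
  rw [setIntegral_congr_fun measurableSet_Ioi integrand_eq, integral_const_mul,
    integral_cpow_mul_cexp_neg_mul_Ioi hs hp] at substitution
  rw [mul_comm 2 (p ^ s), ← div_div, ← substitution]
  ring

end GaussianMoment

lemma Gamma_re_add_nat_div_norm_Gamma_add_nat_le {s : ℂ} (hs : 0 < s.re) (m : ℕ) :
    Real.Gamma (m + s.re) / ‖Complex.Gamma (m + s)‖ ≤ Real.Gamma s.re / ‖Complex.Gamma s‖ := by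
  induction m with
  | zero => simp
  | succ m ih =>
    have hre : 0 < (m : ℝ) + s.re := by positivity
    have hnorm : (m : ℝ) + s.re ≤ ‖(m : ℂ) + s‖ := by
      simpa using re_le_norm ((m : ℂ) + s)
    have hm : (m : ℂ) + s ≠ 0 := fun h => by rw [h, norm_zero] at hnorm; linarith
    rw [Nat.cast_succ, add_right_comm, Real.Gamma_add_one hre.ne', Nat.cast_succ, add_right_comm,
      Complex.Gamma_add_one _ hm, norm_mul, mul_div_mul_comm]
    exact (mul_le_of_le_one_left (by positivity)
      ((div_le_one (hre.trans_le hnorm)).2 hnorm)).trans ih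

noncomputable def besselJCoeff (μ : ℂ) (m : ℕ) : ℂ :=
  (-1) ^ m / ((m.factorial : ℂ) * Complex.Gamma ((m : ℂ) + μ + 1))

lemma besselJ_eq_tsum (μ z : ℂ) :
    besselJ μ z = ∑' m : ℕ, besselJCoeff μ m * (z / 2) ^ (2 * (m : ℂ) + μ) :=
  rfl

section Weber

variable {μ p : ℂ} {c : ℝ}

lemma re_natCast_add_add_one_pos (hμ : -1 < μ.re) (m : ℕ) : 0 < ((m : ℂ) + μ + 1).re := by
  simp only [add_re, natCast_re, one_re]
  linarith [m.cast_nonneg (α := ℝ)]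

lemma summable_norm_besselJCoeff_mul_Gamma (hμ : -1 < μ.re) (u : ℂ) {q : ℝ} (hq : 0 < q) :
    Summable fun m : ℕ => ‖besselJCoeff μ m * u ^ (2 * m) * u ^ μ‖ *
      (Real.Gamma ((m : ℂ) + μ + 1).re / (2 * q ^ ((m : ℂ) + μ + 1).re)) := by
  set R := Real.Gamma (μ + 1).re / ‖Complex.Gamma (μ + 1)‖
  set A := ‖u ^ μ‖ / (2 * q ^ (μ + 1).re)
  have term_eq : ∀ m : ℕ, ‖besselJCoeff μ m * u ^ (2 * m) * u ^ μ‖ *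
      (Real.Gamma ((m : ℂ) + μ + 1).re / (2 * q ^ ((m : ℂ) + μ + 1).re)) =
      A * ((‖u‖ ^ 2 / q) ^ m / m.factorial) *
        (Real.Gamma (m + (μ + 1).re) / ‖Complex.Gamma (m + (μ + 1))‖) := fun m => by
    have hΓ : Complex.Gamma ((m : ℂ) + μ + 1) ≠ 0 :=
      Gamma_ne_zero_of_re_pos (re_natCast_add_add_one_pos hμ m)
    have hre : ((m : ℂ) + μ + 1).re = m + (μ + 1).re := by
      simp only [add_re, natCast_re, one_re]
      ring
    have hpow : q ^ ((m : ℂ) + μ + 1).re = q ^ m * q ^ (μ + 1).re := by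
      rw [hre, Real.rpow_add hq, Real.rpow_natCast]
    rw [hpow, ← add_assoc, hre]
    simp only [besselJCoeff, norm_mul, norm_div, norm_pow, norm_neg, norm_one, one_pow,
      Complex.norm_natCast, div_pow, A]
    field_simp
    ring
  refine Summable.of_nonneg_of_le (fun m => mul_nonneg (norm_nonneg _)
      (div_nonneg (Real.Gamma_pos_of_pos (re_natCast_add_add_one_pos hμ m)).le (by positivity)))
    (fun m => (term_eq m).trans_le ?_)
    ((summable_pow_div_factorial (‖u‖ ^ 2 / q)).mul_left A |>.mul_right R)
  have hμ1 : 0 < (μ + 1).re := by rw [add_re, one_re]; linarith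
  exact mul_le_mul_of_nonneg_left (Gamma_re_add_nat_div_norm_Gamma_add_nat_le hμ1 m) (by positivity)

lemma besselJCoeff_mul_Gamma_div (hμ : -1 < μ.re) (u : ℂ) (hp : p ≠ 0) (m : ℕ) :
    besselJCoeff μ m * u ^ (2 * m) * u ^ μ *
        (Complex.Gamma ((m : ℂ) + μ + 1) / (2 * p ^ ((m : ℂ) + μ + 1))) =
      u ^ μ / (2 * p ^ (μ + 1)) * ((-u ^ 2 / p) ^ m / m.factorial) := by
  have hΓ : Complex.Gamma ((m : ℂ) + μ + 1) ≠ 0 :=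
    Gamma_ne_zero_of_re_pos (re_natCast_add_add_one_pos hμ m)
  have hpow : p ^ ((m : ℂ) + μ + 1) = p ^ m * p ^ (μ + 1) := by
    rw [add_assoc, cpow_add _ _ hp, cpow_natCast]
  rw [hpow, besselJCoeff, div_pow, neg_pow (u ^ 2), ← pow_mul]
  field_simp

lemma cexp_mul_cpow_mul_besselJ_term_eq {x : ℝ} (hc : 0 < c) (hx : 0 < x) (m : ℕ) :
    cexp (-p * (x : ℂ) ^ 2) * (x : ℂ) ^ (μ + 1) *
        (besselJCoeff μ m * ((c : ℂ) * x / 2) ^ (2 * (m : ℂ) + μ)) =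
      besselJCoeff μ m * ((c : ℂ) / 2) ^ (2 * m) * ((c : ℂ) / 2) ^ μ *
        (cexp (-p * (x : ℂ) ^ 2) * (x : ℂ) ^ (2 * ((m : ℂ) + μ + 1) - 1)) := by
  have hc2 : ((c / 2 : ℝ) : ℂ) = (c : ℂ) / 2 := by push_cast; ring
  have hc0 : (c : ℂ) / 2 ≠ 0 := div_ne_zero (ofReal_ne_zero.2 hc.ne') two_ne_zero
  have hx0 : (x : ℂ) ≠ 0 := ofReal_ne_zero.2 hx.ne'
  rw [show (c : ℂ) * x / 2 = ((c / 2 : ℝ) : ℂ) * x by push_cast; ring,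
    mul_cpow_ofReal_nonneg (by positivity) hx.le, hc2, cpow_add (x := (c : ℂ) / 2) _ _ hc0,
    show (2 : ℂ) * m = ((2 * m : ℕ) : ℂ) by push_cast; ring, cpow_natCast,
    show 2 * ((m : ℂ) + μ + 1) - 1 = (μ + 1) + (((2 * m : ℕ) : ℂ) + μ) by push_cast; ring,
    cpow_add (μ + 1) _ hx0]
  ring

theorem integral_cexp_neg_mul_sq_mul_cpow_mul_besselJ (hμ : -1 < μ.re) (hp : 0 < p.re)
    (hc : 0 < c) :
    ∫ x in Ioi (0 : ℝ), cexp (-p * (x : ℂ) ^ 2) * (x : ℂ) ^ (μ + 1) * besselJ μ (c * x) =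
      (c : ℂ) ^ μ / (2 * p) ^ (μ + 1) * cexp (-(c : ℂ) ^ 2 / (4 * p)) := by
  set f : ℕ → ℝ → ℂ := fun m x => cexp (-p * (x : ℂ) ^ 2) * (x : ℂ) ^ (μ + 1) *
    (besselJCoeff μ m * ((c : ℂ) * x / 2) ^ (2 * (m : ℂ) + μ))
  set u : ℂ := (c : ℂ) / 2
  have hs := re_natCast_add_add_one_pos hμ
  have hp0 : p ≠ 0 := fun h => by simp [h] at hp
  have f_eq (m : ℕ) : EqOn (f m) (fun x => besselJCoeff μ m * u ^ (2 * m) * u ^ μ *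
      (cexp (-p * (x : ℂ) ^ 2) * (x : ℂ) ^ (2 * ((m : ℂ) + μ + 1) - 1))) (Ioi 0) :=
    fun x hx => cexp_mul_cpow_mul_besselJ_term_eq hc hx m
  have f_integrable (m : ℕ) : IntegrableOn (f m) (Ioi 0) :=
    IntegrableOn.congr_fun ((integrableOn_cexp_neg_mul_sq_mul_cpow (hs m) hp).const_mul _)
      (f_eq m).symm measurableSet_Ioi
  have integral_norm_f (m : ℕ) : ∫ x in Ioi (0 : ℝ), ‖f m x‖ =
      ‖besselJCoeff μ m * u ^ (2 * m) * u ^ μ‖ *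
        (Real.Gamma ((m : ℂ) + μ + 1).re / (2 * p.re ^ ((m : ℂ) + μ + 1).re)) := by
    rw [setIntegral_congr_fun measurableSet_Ioi fun x hx => congrArg norm (f_eq m hx)]
    simp_rw [norm_mul _ (_ * _)]
    rw [integral_const_mul, integral_norm_cexp_neg_mul_sq_mul_cpow (hs m) hp]
  have integral_f (m : ℕ) : ∫ x in Ioi (0 : ℝ), f m x =
      u ^ μ / (2 * p ^ (μ + 1)) * ((-u ^ 2 / p) ^ m / m.factorial) := by
    rw [setIntegral_congr_fun measurableSet_Ioi (f_eq m), integral_const_mul,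
      integral_cexp_neg_mul_sq_mul_cpow (hs m) hp, besselJCoeff_mul_Gamma_div hμ u hp0 m]
  have summable : Summable fun m => ∫ x in Ioi (0 : ℝ), ‖f m x‖ := by
    simpa only [integral_norm_f] using summable_norm_besselJCoeff_mul_Gamma hμ u hp
  have h2p : (2 * p) ^ (μ + 1) = 2 ^ μ * 2 * p ^ (μ + 1) := by
    rw [← ofReal_ofNat, ofReal_mul_cpow zero_le_two, cpow_add _ _ (by norm_num), cpow_one]
  have hu : u ^ μ = (c : ℂ) ^ μ / 2 ^ μ := by
    simpa using div_cpow_ofReal_nonneg hc.le zero_le_two μ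
  calc ∫ x in Ioi (0 : ℝ), cexp (-p * (x : ℂ) ^ 2) * (x : ℂ) ^ (μ + 1) * besselJ μ (c * x)
      = ∫ x in Ioi (0 : ℝ), ∑' m, f m x := by simp only [f, besselJ_eq_tsum, tsum_mul_left]
    _ = ∑' m, ∫ x in Ioi (0 : ℝ), f m x :=
      (integral_tsum_of_summable_integral_norm f_integrable summable).symm
    _ = ∑' m : ℕ, u ^ μ / (2 * p ^ (μ + 1)) * ((-u ^ 2 / p) ^ m / m.factorial) :=
      tsum_congr integral_f
    _ = u ^ μ / (2 * p ^ (μ + 1)) * cexp (-u ^ 2 / p) := by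
      rw [tsum_mul_left, Complex.exp_eq_exp_ℂ, NormedSpace.exp_eq_tsum_div]
    _ = (c : ℂ) ^ μ / (2 * p) ^ (μ + 1) * cexp (-(c : ℂ) ^ 2 / (4 * p)) := by
      rw [h2p, hu, show -u ^ 2 / p = -(c : ℂ) ^ 2 / (4 * p) by ring]
      ring

end Weber

theorem gaussian_bessel_integral (a b : ℝ) (ha : 0 < a) (r : ℕ)
    (ν : ℂ) (hν : -1 < ν.re) (p : ℂ) (hp : 0 < p.re) :
    ∫ x in Set.Ioi (0:ℝ),
        Complex.exp (-p * (x:ℂ)^2) * (x:ℂ) ^ (ν + 2*(r:ℂ) + 1) *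
          besselJ (ν + 2*(r:ℂ)) ((Real.sqrt (a^2 + b^2) : ℂ) * x)
      = ((a:ℂ)^2 + (b:ℂ)^2) ^ (ν/2 + (r:ℂ)) / (2*p) ^ (ν + 2*(r:ℂ) + 1) *
        Complex.exp (-((a:ℂ)^2 + (b:ℂ)^2) / (4*p)) := by
  have hsum : 0 < a ^ 2 + b ^ 2 := by positivity
  have hμ : -1 < (ν + 2 * (r : ℂ)).re := by
    simp only [add_re, mul_re, re_ofNat, natCast_re, im_ofNat, natCast_im, mul_zero, sub_zero]
    linarith [r.cast_nonneg (α := ℝ)]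
  have sq_sqrt : ((√(a ^ 2 + b ^ 2) : ℝ) : ℂ) ^ 2 = (a : ℂ) ^ 2 + (b : ℂ) ^ 2 := by
    rw [← ofReal_pow, Real.sq_sqrt hsum.le]
    push_cast
    ring
  have sqrt_cpow : ((√(a ^ 2 + b ^ 2) : ℝ) : ℂ) ^ (ν + 2 * (r : ℂ)) =
      ((a : ℂ) ^ 2 + (b : ℂ) ^ 2) ^ (ν / 2 + r) := by
    rw [← sq_sqrt, show ν + 2 * (r : ℂ) = (2 : ℝ) * (ν / 2 + r) by push_cast; ring,
      cpow_mul_ofReal_nonneg (Real.sqrt_nonneg _), Real.rpow_two, ofReal_pow]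
  rw [integral_cexp_neg_mul_sq_mul_cpow_mul_besselJ hμ hp (Real.sqrt_pos.2 hsum), sqrt_cpow,
    sq_sqrt]
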